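/- Let p be a prime, d a divisor of p-1, and consider the cyclotomic scheme Cyc(p,d) on GF(p) = Z/pZ with relations R_j given by x - y ∈ α^j⟨α^d⟩ for a primitive root α mod p. If Γ = (Z/pZ, R_{j_0}) is a weakly distance-regular digraph of girth g (as a digraph), and S = N_{1,g-1} is the set of out-neighbors of 0 at two-way distance (1,g-1), then for every (1,q) ∈ ∂̃(Γ) one has q = g-1; that is, all arcs of Γ have the same type (1,g-1). -/
import Mathlib


/-- There is a directed walk of length `n` from `x` to `y` in the digraph
with arc relation `A`. -/
def HasWalk {V : Type*} (A : V → V → Prop) : ℕ → V → V → Prop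
  | 0 => fun x y => x = y
  | n + 1 => fun x y => ∃ z, A x z ∧ HasWalk A n z y

/-- The one-way distance `∂(x,y)` in the digraph with arc relation `A`. -/
noncomputable def ddist {V : Type*} (A : V → V → Prop) (x y : V) : ℕ :=
  sInf {n | HasWalk A n x y}

/-- The two-way distance `∂̃(x,y) = (∂(x,y), ∂(y,x))`. -/
noncomputable def tdist {V : Type*} (A : V → V → Prop) (x y : V) : ℕ × ℕ :=
  (ddist A x y, ddist A y x)

/-- A digraph is weakly distance-regular if it is strongly connected and the
two-way distance relations form an association scheme, i.e. the intersection
numbers `|{z : ∂̃(x,z) = ĩ, ∂̃(z,y) = j̃}|` depend only on `∂̃(x,y)`. -/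
def IsWDRD {V : Type*} (A : V → V → Prop) : Prop :=
  (∀ x y : V, ∃ n, HasWalk A n x y) ∧
  ∀ (i j : ℕ × ℕ) (x y x' y' : V), tdist A x y = tdist A x' y' →
    {z | tdist A x z = i ∧ tdist A z y = j}.ncard =
    {z | tdist A x' z = i ∧ tdist A z y' = j}.ncard

lemma hasWalk_trans {V : Type*} {A : V → V → Prop} :
    ∀ {n m : ℕ} {x y z : V}, HasWalk A n x y → HasWalk A m y z →
      HasWalk A (n + m) x z := by
  intro n
  induction n with
  | zero =>
    intro m x y z h1 h2
    have hxy : x = y := h1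
    rw [Nat.zero_add, hxy]
    exact h2
  | succ n ih =>
    intro m x y z h1 h2
    obtain ⟨w, hw, hrest⟩ := h1
    rw [Nat.succ_add]
    exact ⟨w, hw, ih hrest h2⟩

lemma hasWalk_map {V : Type*} {A : V → V → Prop} (f : V → V)
    (hf : ∀ u v, A u v → A (f u) (f v)) :
    ∀ {n : ℕ} {u v : V}, HasWalk A n u v → HasWalk A n (f u) (f v) := by
  intro n
  induction n with
  | zero =>
    intro u v h
    exact congrArg f h
  | succ n ih =>
    intro u v h
    obtain ⟨w, hw, hrest⟩ := h
    exact ⟨f w, hf _ _ hw, ih hrest⟩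

theorem stmt17 (p : ℕ) (hp : p.Prime) (d : ℕ) (hd : d ∣ p - 1)
    (α : (ZMod p)ˣ) (hα : ∀ x : (ZMod p)ˣ, x ∈ Subgroup.zpowers α)
    (j0 : ℕ)
    (A : ZMod p → ZMod p → Prop)
    (hA : ∀ x y : ZMod p, A x y ↔
      ∃ k : ℤ, y - x = ((α ^ (j0 : ℤ) * (α ^ d) ^ k : (ZMod p)ˣ) : ZMod p))
    (hwdr : IsWDRD A)
    (g : ℕ) (hg : g = sInf {n | 0 < n ∧ ∃ x, HasWalk A n x x}) :
    ∀ q : ℕ, (∃ x y : ZMod p, tdist A x y = (1, q)) → q = g - 1 := by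
  intro q hq
  obtain ⟨x, y, hxy⟩ := hq
  -- translation invariance of arcs
  have htrA : ∀ (t u v : ZMod p), A u v → A (u + t) (v + t) := by
    intro t u v h
    rw [hA] at h ⊢
    simpa using h
  -- scaling invariance of arcs (by powers of α^d)
  have hscA : ∀ (k' : ℤ) (u v : ZMod p), A u v →
      A ((((α ^ d) ^ k' : (ZMod p)ˣ) : ZMod p) * u)
        ((((α ^ d) ^ k' : (ZMod p)ˣ) : ZMod p) * v) := by
    intro k' u v h
    rw [hA] at h ⊢
    obtain ⟨k, hk⟩ := h
    refine ⟨k' + k, ?_⟩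
    have h2 : (((α ^ d) ^ k' : (ZMod p)ˣ) : ZMod p) * v
        - (((α ^ d) ^ k' : (ZMod p)ˣ) : ZMod p) * u
        = (((α ^ d) ^ k' : (ZMod p)ˣ) : ZMod p) * (v - u) := by ring
    rw [h2, hk, ← Units.val_mul]
    congr 1
    rw [mul_left_comm, ← zpow_add]
  -- walk invariance
  have hwalk_tr : ∀ (t : ZMod p) (n : ℕ) (u v : ZMod p),
      HasWalk A n u v ↔ HasWalk A n (u + t) (v + t) := by
    intro t n u v
    constructor
    · exact hasWalk_map (· + t) (htrA t)
    · intro h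
      have h2 := hasWalk_map (· + (-t)) (htrA (-t)) h
      simpa using h2
  have hinv : ∀ (k' : ℤ) (u : ZMod p),
      (((α ^ d) ^ (-k') : (ZMod p)ˣ) : ZMod p) *
        ((((α ^ d) ^ k' : (ZMod p)ˣ) : ZMod p) * u) = u := by
    intro k' u
    rw [← mul_assoc, ← Units.val_mul, ← zpow_add, neg_add_cancel, zpow_zero,
      Units.val_one, one_mul]
  have hwalk_sc : ∀ (k' : ℤ) (n : ℕ) (u v : ZMod p),
      HasWalk A n u v ↔
        HasWalk A n ((((α ^ d) ^ k' : (ZMod p)ˣ) : ZMod p) * u)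
          ((((α ^ d) ^ k' : (ZMod p)ˣ) : ZMod p) * v) := by
    intro k' n u v
    constructor
    · exact hasWalk_map _ (hscA k')
    · intro h
      have h2 := hasWalk_map _ (hscA (-k')) h
      simpa [hinv] using h2
  -- distance invariance
  have hdd_tr : ∀ (t u v : ZMod p), ddist A (u + t) (v + t) = ddist A u v := by
    intro t u v
    unfold ddist
    congr 1
    ext n
    exact (hwalk_tr t n u v).symm
  have hdd_sc : ∀ (k' : ℤ) (u v : ZMod p),
      ddist A ((((α ^ d) ^ k' : (ZMod p)ˣ) : ZMod p) * u)
        ((((α ^ d) ^ k' : (ZMod p)ˣ) : ZMod p) * v) = ddist A u v := by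
    intro k' u v
    unfold ddist
    congr 1
    ext n
    exact (hwalk_sc k' n u v).symm
  have htd_tr : ∀ (t u v : ZMod p), tdist A (u + t) (v + t) = tdist A u v := by
    intro t u v
    unfold tdist
    rw [hdd_tr, hdd_tr]
  have htd_sc : ∀ (k' : ℤ) (u v : ZMod p),
      tdist A ((((α ^ d) ^ k' : (ZMod p)ˣ) : ZMod p) * u)
        ((((α ^ d) ^ k' : (ZMod p)ˣ) : ZMod p) * v) = tdist A u v := by
    intro k' u v
    unfold tdist
    rw [hdd_sc, hdd_sc]
  -- girth set is nonempty, pick a shortest closed walk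
  have hGne : Set.Nonempty {n | 0 < n ∧ ∃ x, HasWalk A n x x} := by
    have harc : A 0 (((α ^ (j0 : ℤ) * (α ^ d) ^ (0 : ℤ) : (ZMod p)ˣ)) : ZMod p) := by
      rw [hA]; exact ⟨0, by simp⟩
    obtain ⟨n, hn⟩ := hwdr.1 (((α ^ (j0 : ℤ) * (α ^ d) ^ (0 : ℤ) : (ZMod p)ˣ)) : ZMod p) 0
    exact ⟨n + 1, Nat.succ_pos n, 0, ⟨_, harc, hn⟩⟩
  have hgG : g ∈ {n | 0 < n ∧ ∃ x, HasWalk A n x x} := hg ▸ Nat.sInf_mem hGne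
  obtain ⟨hgpos, x0, hwx0⟩ := hgG
  obtain ⟨m, hm⟩ : ∃ m, g = m + 1 := ⟨g - 1, (Nat.succ_pred_eq_of_pos hgpos).symm⟩
  rw [hm] at hwx0
  obtain ⟨z0, harc0, hw0⟩ := hwx0
  -- the arc of the closed walk
  obtain ⟨k1, hk1⟩ := (hA x0 z0).mp harc0
  -- the given arc x → y
  have hddxy : ddist A x y = 1 := congrArg Prod.fst hxy
  have hwalkxy : HasWalk A 1 x y := by
    have hne : Set.Nonempty {n | HasWalk A n x y} := hwdr.1 x y
    have := Nat.sInf_mem hne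
    rwa [show sInf {n | HasWalk A n x y} = 1 from hddxy] at this
  obtain ⟨y', harcxy, hy'⟩ := hwalkxy
  have hy'y : y' = y := hy'
  rw [hy'y] at harcxy
  obtain ⟨k2, hk2⟩ := (hA x y).mp harcxy
  -- relate the two arcs by a scaling
  have hsu : ((α ^ d) ^ (k2 - k1) : (ZMod p)ˣ) * (α ^ (j0 : ℤ) * (α ^ d) ^ k1)
      = α ^ (j0 : ℤ) * (α ^ d) ^ k2 := by
    rw [mul_left_comm, ← zpow_add]
    congr 2
    omega
  -- tdist A x y = tdist A x0 z0
  have e1 : tdist A x y = tdist A 0 ((α ^ (j0 : ℤ) * (α ^ d) ^ k2 : (ZMod p)ˣ) : ZMod p) := by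
    have h2 := htd_tr x 0 ((α ^ (j0 : ℤ) * (α ^ d) ^ k2 : (ZMod p)ˣ) : ZMod p)
    rw [zero_add] at h2
    rw [← h2]
    congr 1
    rw [← hk2]; ring
  have e2 : tdist A 0 ((α ^ (j0 : ℤ) * (α ^ d) ^ k2 : (ZMod p)ˣ) : ZMod p)
      = tdist A 0 ((α ^ (j0 : ℤ) * (α ^ d) ^ k1 : (ZMod p)ˣ) : ZMod p) := by
    have h2 := htd_sc (k2 - k1) 0 ((α ^ (j0 : ℤ) * (α ^ d) ^ k1 : (ZMod p)ˣ) : ZMod p)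
    rw [mul_zero, ← Units.val_mul, hsu] at h2
    exact h2
  have e3 : tdist A 0 ((α ^ (j0 : ℤ) * (α ^ d) ^ k1 : (ZMod p)ˣ) : ZMod p)
      = tdist A x0 z0 := by
    have h2 := htd_tr x0 0 ((α ^ (j0 : ℤ) * (α ^ d) ^ k1 : (ZMod p)ˣ) : ZMod p)
    rw [zero_add] at h2
    rw [← h2]
    congr 1
    rw [← hk1]; ring
  have hfinal : tdist A x0 z0 = (1, q) := by rw [← e3, ← e2, ← e1, hxy]
  have hq2 : ddist A z0 x0 = q := congrArg Prod.snd hfinal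
  -- compute ddist A z0 x0 = m
  have hSne : Set.Nonempty {n | HasWalk A n z0 x0} := ⟨m, hw0⟩
  have hrmem : HasWalk A (ddist A z0 x0) z0 x0 := Nat.sInf_mem hSne
  have hrle : ddist A z0 x0 ≤ m := Nat.sInf_le hw0
  have hclosed : HasWalk A (1 + ddist A z0 x0) x0 x0 :=
    hasWalk_trans (show HasWalk A 1 x0 z0 from ⟨z0, harc0, rfl⟩) hrmem
  have hge : g ≤ 1 + ddist A z0 x0 := by
    rw [hg]
    exact Nat.sInf_le ⟨by omega, x0, hclosed⟩
  omega
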